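/- Let H be Hermitian with minimum eigenvalue λ(H), let ρ be a density matrix with tr(Hρ) ≤ λ(H) + δ, and let P project onto eigenvectors of H with eigenvalue less than λ(H) + δ' where δ' > 0 and tr(Pρ) > 0. Define ρ' = PρP / tr(Pρ). Then (1/2)‖ρ − ρ'‖₁ ≤ √(δ/δ'), where ‖·‖₁ is the trace norm. -/

import Mathlib

/-!
Markov's inequality in operator form, `λ + δ' (1 - P) ≤ H`, gives `1 - tr(Pρ) ≤ δ / δ'`.
With `X = √ρ` and `Y = P X / √tr(Pρ)` we have `ρ = X Xᴴ`, `ρ' = Y Yᴴ` and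
`X Xᴴ - Y Yᴴ = ½ ((X - Y)(X + Y)ᴴ + (X + Y)(X - Y)ᴴ)`. Reading off the eigenvalues of the
right-hand side in its eigenbasis and applying Cauchy–Schwarz bounds its trace norm by
`‖X - Y‖₂ ‖X + Y‖₂ = 2 √(1 - (Re tr XᴴY)²) = 2 √(1 - tr(Pρ))`; this is the Fuchs–van de Graaf
inequality for the purifications `X`, `Y`, whose overlap is the fidelity `√tr(Pρ)`.
-/

open Matrix
open scoped Kronecker Matrix.Norms.L2Operator ComplexOrder

noncomputable section

noncomputable def posSemidefSqrt {m : ℕ} {A : Matrix (Fin m) (Fin m) ℂ} (hA : A.PosSemidef) :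
    Matrix (Fin m) (Fin m) ℂ :=
  (hA.1.eigenvectorUnitary : Matrix (Fin m) (Fin m) ℂ) *
    Matrix.diagonal ((↑) ∘ (Real.sqrt ∘ hA.1.eigenvalues)) *
    (star hA.1.eigenvectorUnitary : Matrix (Fin m) (Fin m) ℂ)

noncomputable def traceNorm {m : ℕ} (A : Matrix (Fin m) (Fin m) ℂ) : ℝ :=
  ((posSemidefSqrt (Matrix.posSemidef_conjTranspose_mul_self A)).trace).re

noncomputable def quadForm {m : Type*} [Fintype m] (H : Matrix m m ℂ) (v : m → ℂ) : ℝ :=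
  (dotProduct (star v) (H *ᵥ v)).re

noncomputable def vnormSq {m : Type*} [Fintype m] (v : m → ℂ) : ℝ :=
  (dotProduct (star v) v).re

open scoped MatrixOrder

lemma re_trace_conjTranspose_mul_self {m : Type*} [Fintype m] (A : Matrix m m ℂ) :
    (Aᴴ * A).trace.re = ∑ i, ∑ j, ‖A i j‖ ^ 2 := by
  simp only [trace, diag_apply, mul_apply, conjTranspose_apply, Complex.re_sum,
    Complex.sq_norm, Complex.normSq_apply, Complex.mul_re, Complex.star_def, Complex.conj_re,
    Complex.conj_im]
  rw [Finset.sum_comm]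
  congr! 2
  ring

lemma sum_abs_re_diag_mul_conjTranspose_le {m : Type*} [Fintype m] (A B : Matrix m m ℂ) :
    ∑ i, |((A * Bᴴ) i i).re| ≤ √(Aᴴ * A).trace.re * √(Bᴴ * B).trace.re := by
  have hentry : ∀ i, |((A * Bᴴ) i i).re| ≤ ∑ j, ‖A i j‖ * ‖B i j‖ := fun i => by
    refine (Complex.abs_re_le_norm _).trans <| (norm_sum_le _ _).trans_eq ?_
    simp
  have hCS := Real.sum_mul_le_sqrt_mul_sqrt (Finset.univ : Finset (m × m))
    (fun p => ‖A p.1 p.2‖) (fun p => ‖B p.1 p.2‖)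
  simp only [Finset.univ_product_univ.symm, Finset.sum_product] at hCS
  rw [re_trace_conjTranspose_mul_self, re_trace_conjTranspose_mul_self]
  exact (Finset.sum_le_sum fun i _ => hentry i).trans hCS

lemma trace_conjTranspose_mul_self_unitary_mul {m : Type*} [Fintype m] [DecidableEq m]
    {U : Matrix m m ℂ} (hU : U ∈ unitaryGroup m ℂ) (A : Matrix m m ℂ) :
    ((U * A)ᴴ * (U * A)).trace = (Aᴴ * A).trace := by
  rw [conjTranspose_mul, Matrix.mul_assoc, ← Matrix.mul_assoc Uᴴ U,
    ← star_eq_conjTranspose U, Unitary.star_mul_self_of_mem hU, Matrix.one_mul]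

lemma re_trace_conjTranspose_mul_self_nonneg {m : Type*} [Fintype m] (A : Matrix m m ℂ) :
    0 ≤ (Aᴴ * A).trace.re := by
  rw [re_trace_conjTranspose_mul_self]
  positivity

lemma Matrix.IsHermitian.trace_cfc {m : Type*} [Fintype m] [DecidableEq m]
    {A : Matrix m m ℂ} (hA : A.IsHermitian) (f : ℝ → ℝ) :
    (cfc f A).trace = ∑ i, (f (hA.eigenvalues i) : ℂ) := by
  rw [hA.cfc_eq, IsHermitian.cfc, Unitary.conjStarAlgAut_apply, trace_mul_cycle,
    Unitary.coe_star_mul_self, one_mul, trace_diagonal]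
  rfl

lemma re_trace_mul_nonneg {m : Type*} [Fintype m] [DecidableEq m] {A ρ : Matrix m m ℂ}
    (hA : A.PosSemidef) (hρ : ρ.PosSemidef) : 0 ≤ (A * ρ).trace.re := by
  obtain ⟨X, rfl⟩ := CStarAlgebra.nonneg_iff_eq_star_mul_self.mp hρ.nonneg
  rw [← Matrix.mul_assoc, trace_mul_cycle, star_eq_conjTranspose]
  exact (Complex.nonneg_iff.mp (hA.mul_mul_conjTranspose_same X).trace_nonneg).1

lemma re_trace_mul_le_of_le {m : Type*} [Fintype m] [DecidableEq m] {M N ρ : Matrix m m ℂ}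
    (hMN : M ≤ N) (hρ : ρ.PosSemidef) : (M * ρ).trace.re ≤ (N * ρ).trace.re := by
  have := re_trace_mul_nonneg (le_iff.mp hMN) hρ
  rw [Matrix.sub_mul, trace_sub, Complex.sub_re] at this
  linarith

lemma posSemidefSqrt_eq_sqrt {m : ℕ} {A : Matrix (Fin m) (Fin m) ℂ} (hA : A.PosSemidef) :
    posSemidefSqrt hA = CFC.sqrt A := by
  rw [CFC.sqrt_eq_cfc, cfc_nnreal_eq_real _ A, hA.1.cfc_eq, IsHermitian.cfc,
    Unitary.conjStarAlgAut_apply, posSemidefSqrt]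
  congr 3
  funext i
  simp [max_eq_left (hA.eigenvalues_nonneg i)]

lemma traceNorm_eq_re_trace_abs {m : ℕ} (A : Matrix (Fin m) (Fin m) ℂ) :
    traceNorm A = (CFC.abs A).trace.re := by
  rw [traceNorm, posSemidefSqrt_eq_sqrt, CFC.abs, star_eq_conjTranspose]

lemma traceNorm_eq_sum_abs_eigenvalues {m : ℕ} {A : Matrix (Fin m) (Fin m) ℂ}
    (hA : A.IsHermitian) : traceNorm A = ∑ i, |hA.eigenvalues i| := by
  rw [traceNorm_eq_re_trace_abs, CFC.abs_eq_cfc_norm A hA, hA.trace_cfc, Complex.re_sum]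
  simp

lemma traceNorm_half_smul_add_le {m : ℕ} (A B : Matrix (Fin m) (Fin m) ℂ) :
    traceNorm ((1 / 2 : ℂ) • (A * Bᴴ + B * Aᴴ)) ≤
      √(Aᴴ * A).trace.re * √(Bᴴ * B).trace.re := by
  set D := (1 / 2 : ℂ) • (A * Bᴴ + B * Aᴴ)
  have hD : D.IsHermitian := by
    simp [D, IsHermitian, conjTranspose_smul, add_comm]
  set V : Matrix (Fin m) (Fin m) ℂ := ↑hD.eigenvectorUnitary
  have hV : star V ∈ unitaryGroup (Fin m) ℂ := (star hD.eigenvectorUnitary).2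
  have heig : ∀ i, hD.eigenvalues i = ((star V * A * (star V * B)ᴴ) i i).re := fun i => by
    have hdiag := congr_fun₂ hD.conjStarAlgAut_star_eigenvectorUnitary i i
    rw [Unitary.conjStarAlgAut_apply, Unitary.coe_star, star_star, diagonal_apply_eq] at hdiag
    have hconj : star V * D * V =
        (1 / 2 : ℂ) • (star V * A * (star V * B)ᴴ + (star V * A * (star V * B)ᴴ)ᴴ) := by
      simp only [D, conjTranspose_mul, star_eq_conjTranspose, conjTranspose_conjTranspose,
        Matrix.mul_smul, Matrix.smul_mul, Matrix.mul_add, Matrix.add_mul, Matrix.mul_assoc]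
    calc hD.eigenvalues i = ((star V * D * V) i i).re := by simp [V, hdiag]
      _ = _ := by
        rw [hconj, Matrix.smul_apply, Matrix.add_apply, conjTranspose_apply, Complex.star_def,
          Complex.add_conj]
        simp
  calc traceNorm D = ∑ i, |hD.eigenvalues i| := traceNorm_eq_sum_abs_eigenvalues hD
    _ ≤ √((star V * A)ᴴ * (star V * A)).trace.re *
          √((star V * B)ᴴ * (star V * B)).trace.re := by
      simpa only [heig] using sum_abs_re_diag_mul_conjTranspose_le (star V * A) (star V * B)
    _ = _ := by
      rw [trace_conjTranspose_mul_self_unitary_mul hV, trace_conjTranspose_mul_self_unitary_mul hV]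

lemma half_traceNorm_mul_conjTranspose_sub_le {m : ℕ} {X Y : Matrix (Fin m) (Fin m) ℂ}
    (hX : (Xᴴ * X).trace = 1) (hY : (Yᴴ * Y).trace = 1) :
    1 / 2 * traceNorm (X * Xᴴ - Y * Yᴴ) ≤ √(1 - (Xᴴ * Y).trace.re ^ 2) := by
  set t := (Xᴴ * Y).trace.re
  have hYX : (Yᴴ * X).trace.re = t := by
    rw [← conjTranspose_conjTranspose X, ← conjTranspose_mul, trace_conjTranspose,
      Complex.star_def, Complex.conj_re]
  have hpolar : X * Xᴴ - Y * Yᴴ = (1 / 2 : ℂ) • ((X - Y) * (X + Y)ᴴ + (X + Y) * (X - Y)ᴴ) := by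
    have h2 : (X - Y) * (X + Y)ᴴ + (X + Y) * (X - Y)ᴴ = (2 : ℂ) • (X * Xᴴ - Y * Yᴴ) := by
      rw [conjTranspose_add, conjTranspose_sub, two_smul]
      noncomm_ring
    rw [h2, smul_smul]
    norm_num
  have hminus : ((X - Y)ᴴ * (X - Y)).trace.re = 2 - 2 * t := by
    simp only [conjTranspose_sub, Matrix.sub_mul, Matrix.mul_sub, trace_sub, Complex.sub_re, hX, hY,
      hYX, Complex.one_re]
    ring
  have hplus : ((X + Y)ᴴ * (X + Y)).trace.re = 2 + 2 * t := by
    simp only [conjTranspose_add, Matrix.add_mul, Matrix.mul_add, trace_add, Complex.add_re, hX, hY,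
      hYX, Complex.one_re]
    ring
  have h0 : 0 ≤ 2 - 2 * t := hminus ▸ re_trace_conjTranspose_mul_self_nonneg _
  calc 1 / 2 * traceNorm (X * Xᴴ - Y * Yᴴ)
      ≤ 1 / 2 * (√(2 - 2 * t) * √(2 + 2 * t)) := by
        rw [hpolar, ← hminus, ← hplus]
        gcongr
        exact traceNorm_half_smul_add_le _ _
    _ = √(1 - t ^ 2) := by
        rw [← Real.sqrt_mul h0, show (2 - 2 * t) * (2 + 2 * t) = 2 ^ 2 * (1 - t ^ 2) by ring,
          Real.sqrt_mul (by norm_num), Real.sqrt_sq (by norm_num)]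
        ring

lemma half_traceNorm_sub_projected_state_le {m : ℕ} {ρ P : Matrix (Fin m) (Fin m) ℂ}
    (hρ : ρ.PosSemidef) (hρ1 : ρ.trace = 1) (hP : P.IsHermitian) (hPP : P * P = P)
    (hp : 0 < (P * ρ).trace.re) :
    1 / 2 * traceNorm (ρ - ((P * ρ).trace)⁻¹ • (P * ρ * P)) ≤ √(1 - (P * ρ).trace.re) := by
  set X := CFC.sqrt ρ
  have hXh : Xᴴ = X := (CFC.sqrt_nonneg ρ).posSemidef.isHermitian.eq
  have hXX : X * X = ρ := CFC.sqrt_mul_sqrt_self ρ hρ.nonneg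
  set p := (P * ρ).trace.re
  have hPX : (P * ρ).trace = ((P * X)ᴴ * (P * X)).trace := by
    rw [conjTranspose_mul, hXh, hP.eq, Matrix.mul_assoc, ← Matrix.mul_assoc P, hPP, ← hXX,
      ← Matrix.mul_assoc, trace_mul_cycle, Matrix.mul_assoc]
  have hpc : (P * ρ).trace = p := by
    have h := (posSemidef_conjTranspose_mul_self (P * X)).trace_nonneg
    rw [← hPX] at h
    exact Complex.eq_re_of_ofReal_le (by rwa [Complex.ofReal_zero])
  set Y := (√p)⁻¹ • (P * X)
  have hX : (Xᴴ * X).trace = 1 := by rw [hXh, hXX, hρ1]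
  have hY : (Yᴴ * Y).trace = 1 := by
    simp only [Y, conjTranspose_smul, star_trivial, Matrix.smul_mul, Matrix.mul_smul, smul_smul,
      trace_smul, ← hPX, hpc]
    rw [← mul_inv, Real.mul_self_sqrt hp.le, Complex.real_smul, ← Complex.ofReal_mul,
      inv_mul_cancel₀ hp.ne', Complex.ofReal_one]
  have hXY : (Xᴴ * Y).trace.re = √p := by
    rw [Matrix.mul_smul, trace_smul, hXh, ← Matrix.mul_assoc, trace_mul_cycle, hXX,
      trace_mul_comm, hpc, Complex.real_smul, Complex.re_ofReal_mul, Complex.ofReal_re,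
      inv_mul_eq_div, Real.div_sqrt]
  have hYY : Y * Yᴴ = ((P * ρ).trace)⁻¹ • (P * ρ * P) := by
    simp only [Y, conjTranspose_smul, star_trivial, Matrix.smul_mul, Matrix.mul_smul, smul_smul,
      conjTranspose_mul, hXh, hP.eq, hpc]
    rw [← mul_inv, Real.mul_self_sqrt hp.le, ← Complex.ofReal_inv, Complex.coe_smul,
      Matrix.mul_assoc, ← Matrix.mul_assoc X, hXX, Matrix.mul_assoc]
  have := half_traceNorm_mul_conjTranspose_sub_le hX hY
  rwa [hXY, hXh, hXX, hYY, Real.sq_sqrt hp.le] at this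

section LowEnergy

variable {m : Type*} [Fintype m] [DecidableEq m]

def lowEnergyProjection (H : Matrix m m ℂ) (c : ℝ) : Matrix m m ℂ :=
  cfc (fun x : ℝ => if x < c then (1 : ℝ) else 0) H

lemma lowEnergyProjection_eq {H : Matrix m m ℂ} (hH : H.IsHermitian) (c : ℝ) :
    lowEnergyProjection H c = (hH.eigenvectorUnitary : Matrix m m ℂ) *
      diagonal (fun i => if hH.eigenvalues i < c then (1 : ℂ) else 0) *
      star (hH.eigenvectorUnitary : Matrix m m ℂ) := by
  rw [lowEnergyProjection, hH.cfc_eq, IsHermitian.cfc, Unitary.conjStarAlgAut_apply]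
  congr 3
  funext i
  split_ifs <;> simp [*]

lemma isHermitian_lowEnergyProjection (H : Matrix m m ℂ) (c : ℝ) :
    (lowEnergyProjection H c).IsHermitian :=
  cfc_predicate _ H

lemma lowEnergyProjection_mul_self (H : Matrix m m ℂ) (c : ℝ) :
    lowEnergyProjection H c * lowEnergyProjection H c = lowEnergyProjection H c := by
  have hcont := H.finite_real_spectrum.continuousOn fun x : ℝ => if x < c then (1 : ℝ) else 0
  rw [lowEnergyProjection, ← cfc_mul _ _ H hcont hcont]
  congr 1
  funext x
  split_ifs <;> simp

lemma algebraMap_add_smul_one_sub_lowEnergyProjection_le {H : Matrix m m ℂ} (hH : H.IsHermitian)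
    {lam : ℝ} (hlam : ∀ i, lam ≤ hH.eigenvalues i) (δ : ℝ) :
    algebraMap ℝ _ lam + δ • (1 - lowEnergyProjection H (lam + δ)) ≤ H := by
  have hcont (f : ℝ → ℝ) : ContinuousOn f (spectrum ℝ H) := H.finite_real_spectrum.continuousOn f
  set f : ℝ → ℝ := fun x => if x < lam + δ then 1 else 0
  have hg : cfc (fun x => lam + δ * (1 - f x)) H =
      algebraMap ℝ _ lam + δ • (1 - lowEnergyProjection H (lam + δ)) := by
    rw [cfc_add H _ _ (hcont _) (hcont _), cfc_const lam H, cfc_const_mul _ _ H (hcont _),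
      cfc_sub _ _ H (hcont _) (hcont _), cfc_const_one ℝ H]
    rfl
  rw [← hg]
  conv_rhs => rw [← cfc_id ℝ H]
  refine cfc_mono (fun x hx => ?_) (hcont _) (hcont _)
  obtain ⟨i, rfl⟩ := hH.spectrum_real_eq_range_eigenvalues ▸ hx
  have := hlam i
  simp only [f, id]
  split_ifs <;> linarith

lemma mul_one_sub_re_trace_lowEnergyProjection_mul_le {H ρ : Matrix m m ℂ} (hH : H.IsHermitian)
    (hρ : ρ.PosSemidef) (hρ1 : ρ.trace = 1) {lam : ℝ} (hlam : ∀ i, lam ≤ hH.eigenvalues i)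
    (δ : ℝ) :
    δ * (1 - (lowEnergyProjection H (lam + δ) * ρ).trace.re) ≤ (H * ρ).trace.re - lam := by
  have := re_trace_mul_le_of_le (algebraMap_add_smul_one_sub_lowEnergyProjection_le hH hlam δ) hρ
  simp only [Algebra.algebraMap_eq_smul_one, Matrix.add_mul, Matrix.smul_mul, Matrix.sub_mul,
    Matrix.one_mul, trace_add, trace_smul, trace_sub, hρ1, Complex.add_re, Complex.sub_re,
    Complex.real_smul, Complex.re_ofReal_mul, Complex.one_re] at this
  linarith

end LowEnergy

theorem low_energy_trace_dist_general {n : ℕ} (H ρ P ρ' : Matrix (Fin n) (Fin n) ℂ)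
    (hH : H.IsHermitian) (hρ : ρ.PosSemidef) (hρ1 : ρ.trace = 1)
    (lam δ δ' : ℝ) (hδ' : 0 < δ')
    (hlam : IsLeast (Set.range hH.eigenvalues) lam)
    (hP : P = (hH.eigenvectorUnitary : Matrix (Fin n) (Fin n) ℂ) *
        Matrix.diagonal (fun i => if hH.eigenvalues i < lam + δ' then (1 : ℂ) else 0) *
        star (hH.eigenvectorUnitary : Matrix (Fin n) (Fin n) ℂ))
    (htr : ((H * ρ).trace).re ≤ lam + δ)
    (hPρ : 0 < ((P * ρ).trace).re)
    (hρ' : ρ' = ((P * ρ).trace)⁻¹ • (P * ρ * P)) :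
    (1 / 2) * traceNorm (ρ - ρ') ≤ Real.sqrt (δ / δ') := by
  have hPproj : P = lowEnergyProjection H (lam + δ') := by rw [hP, lowEnergyProjection_eq hH]
  have hmarkov := mul_one_sub_re_trace_lowEnergyProjection_mul_le hH hρ hρ1
    (fun i => hlam.2 ⟨i, rfl⟩) δ'
  rw [← hPproj] at hmarkov
  have hgap : 1 - (P * ρ).trace.re ≤ δ / δ' := by
    rw [le_div_iff₀ hδ']
    linarith
  rw [hρ']
  calc 1 / 2 * traceNorm (ρ - ((P * ρ).trace)⁻¹ • (P * ρ * P))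
      ≤ √(1 - (P * ρ).trace.re) :=
        half_traceNorm_sub_projected_state_le hρ hρ1
          (hPproj ▸ isHermitian_lowEnergyProjection H _)
          (hPproj ▸ lowEnergyProjection_mul_self H _) hPρ
    _ ≤ √(δ / δ') := Real.sqrt_le_sqrt hgap

/-- trace-distance bound `(1/2)‖ρ − ρ'‖₁ ≤ √(δ/δ')` for the renormalized
low-energy part `ρ' = PρP / tr(Pρ)`. -/
theorem low_energy_trace_dist {n : ℕ} (H ρ P ρ' : Matrix (Fin n) (Fin n) ℂ)
    (hH : H.IsHermitian) (hρ : ρ.PosSemidef) (hρ1 : ρ.trace = 1)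
    (lam δ δ' : ℝ) (hδ : 0 ≤ δ) (hδ' : 0 < δ')
    (hlam : IsLeast (Set.range hH.eigenvalues) lam)
    (hP : P = (hH.eigenvectorUnitary : Matrix (Fin n) (Fin n) ℂ) *
        Matrix.diagonal (fun i => if hH.eigenvalues i < lam + δ' then (1 : ℂ) else 0) *
        star (hH.eigenvectorUnitary : Matrix (Fin n) (Fin n) ℂ))
    (htr : ((H * ρ).trace).re ≤ lam + δ)
    (hPρ : 0 < ((P * ρ).trace).re)
    (hρ' : ρ' = ((P * ρ).trace)⁻¹ • (P * ρ * P)) :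
    (1 / 2) * traceNorm (ρ - ρ') ≤ Real.sqrt (δ / δ') :=
  low_energy_trace_dist_general H ρ P ρ' hH hρ hρ1 lam δ δ' hδ' hlam hP htr hPρ hρ'
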